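/- arXiv:1609.07776 — 9 statements merged into one kernel-verified Lean document; each statement's English description precedes it below -/
import Mathlib

section
/- Let A and B be C*-algebras with A unital, and let T : A → B be a linear map such that for all a, b ∈ A, a b* = 1 implies T(a) T(b)* = T(1). Then T(1) is a projection in B, i.e., T(1)* = T(1) and T(1)² = T(1). In particular, the same conclusion holds whenever T is a *-homomorphism at the unit of A. -/
/-- A map `T` between C*-algebras is a `*`-homomorphism at the point `z` if
`a * b* = z` implies `T (a * b*) = T a * (T b)* = T z` and
`c* * d = z` implies `T (c* * d) = (T c)* * T d = T z`. -/
def IsStarHomAt {A B : Type*} [Mul A] [Star A] [Mul B] [Star B]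
    (T : A → B) (z : A) : Prop :=
  (∀ a b : A, a * star b = z →
      T (a * star b) = T a * star (T b) ∧ T a * star (T b) = T z) ∧
  (∀ c d : A, star c * d = z →
      T (star c * d) = star (T c) * T d ∧ star (T c) * T d = T z)

/-- If `T : A → B` is a linear map between C*-algebras, `A` unital, such that
`a * b* = 1` implies `T a * (T b)* = T 1`, then `T 1` is a projection. In particular
this holds when `T` is a `*`-homomorphism at the unit of `A`. -/
theorem stmt0 {A B : Type*}
    [NormedRing A] [StarRing A] [CStarRing A] [CompleteSpace A]
    [NormedAlgebra ℂ A] [StarModule ℂ A]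
    [NonUnitalNormedRing B] [StarRing B] [CStarRing B] [CompleteSpace B]
    [NormedSpace ℂ B] [IsScalarTower ℂ B B] [SMulCommClass ℂ B B] [StarModule ℂ B]
    (T : A →ₗ[ℂ] B)
    (h : ∀ a b : A, a * star b = 1 → T a * star (T b) = T 1) :
    star (T 1) = T 1 ∧ T 1 * T 1 = T 1 := by
  have key : T 1 * star (T 1) = T 1 := h 1 1 (by simp)
  have hsa : star (T 1) = T 1 := by
    conv_lhs => rw [← key]
    rw [star_mul, star_star, key]
  refine ⟨hsa, ?_⟩
  nth_rewrite 2 [← hsa]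
  exact key
end

section
/- Let A and B be C*-algebras with A unital, and let T : A → B be a linear map such that for all a, b ∈ A, a b* = 1 implies T(a) T(b)* = T(1). Then T is continuous (bounded), and T(1) T(a) = T(a) for every a ∈ A. -/
/-!
Put `p = T 1`. Taking `a = b = 1` shows `p * star p = p`, so `p` is a projection. For a unitary
`u`, `T u * star (T u) = p` forces `‖T u‖ ≤ 1` and `p * T u = T u`, the latter because
`(p * T u - T u) * star (p * T u - T u) = 0`. Every element `x` of a unital C⋆-algebra is a
combination of four unitaries with coefficients of norm at most `‖x‖ / 2`, hence
`‖T x‖ ≤ 2 ‖x‖` and `p * T x = T x`.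
-/

lemma isStarProjection_of_mul_star_self_eq {R : Type*} [Mul R] [StarMul R] {p : R}
    (hp : p * star p = p) : IsStarProjection p := by
  have hstar : star p = p := by
    have h := congrArg star hp
    rw [star_mul, star_star] at h
    rw [← h, hp]
  exact ⟨by rwa [hstar] at hp, hstar⟩

section CStarRing

variable {B : Type*} [NonUnitalNormedRing B] [StarRing B] [CStarRing B] {p v : B}

lemma IsStarProjection.norm_le_one_of_mul_star_self_eq (hp : IsStarProjection p)
    (hv : v * star v = p) : ‖v‖ ≤ 1 := by
  have hsq : ‖v‖ * ‖v‖ ≤ 1 := by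
    rw [← CStarRing.norm_self_mul_star, hv]
    exact hp.norm_le p
  nlinarith [norm_nonneg v]

lemma IsStarProjection.mul_of_mul_star_self_eq (hp : IsStarProjection p)
    (hv : v * star v = p) : p * v = v := by
  have hzero : (p * v - v) * star (p * v - v) = 0 := by
    have expand : (p * v - v) * star (p * v - v) =
        p * (v * star v) * p - p * (v * star v) - (v * star v) * p + v * star v := by
      rw [star_sub, star_mul, hp.isSelfAdjoint.star_eq]
      noncomm_ring
    rw [expand, hv, hp.isIdempotentElem.eq, hp.isIdempotentElem.eq]
    abel
  exact sub_eq_zero.mp ((CStarRing.mul_star_self_eq_zero_iff _).mp hzero)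

end CStarRing

lemma CStarAlgebra.norm_apply_le_of_forall_unitary {A E : Type*} [CStarAlgebra A]
    [SeminormedAddCommGroup E] [NormedSpace ℂ E] (f : A →ₗ[ℂ] E) {C : ℝ}
    (hf : ∀ u ∈ unitary A, ‖f u‖ ≤ C) (x : A) : ‖f x‖ ≤ 2 * C * ‖x‖ := by
  have hC : 0 ≤ C := (norm_nonneg _).trans (hf 1 (one_mem _))
  obtain ⟨u, c, rfl, hc⟩ := CStarAlgebra.exists_sum_four_unitary x
  calc ‖f (∑ i, c i • (u i : A))‖ ≤ ∑ i : Fin 4, ‖c i‖ * ‖f (u i)‖ := by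
        rw [map_sum]
        refine (norm_sum_le _ _).trans_eq ?_
        simp only [map_smul, norm_smul]
    _ ≤ ∑ i : Fin 4, ‖∑ i, c i • (u i : A)‖ / 2 * C := by
        gcongr with i
        · exact hc i
        · exact hf _ (u i).2
    _ = 2 * C * ‖∑ i, c i • (u i : A)‖ := by
        simp only [Finset.sum_const, Finset.card_univ, Fintype.card_fin, nsmul_eq_mul]
        ring

theorem stmt1_general {A B : Type*}
    [NormedRing A] [StarRing A] [CStarRing A] [CompleteSpace A]
    [NormedAlgebra ℂ A] [StarModule ℂ A]
    [NonUnitalNormedRing B] [StarRing B] [CStarRing B]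
    [NormedSpace ℂ B] [SMulCommClass ℂ B B]
    (T : A →ₗ[ℂ] B)
    (h : ∀ a b : A, a * star b = 1 → T a * star (T b) = T 1) :
    Continuous T ∧ ∀ a : A, T 1 * T a = T a := by
  let _ : CStarAlgebra A := { }
  have hp : IsStarProjection (T 1) := isStarProjection_of_mul_star_self_eq (h 1 1 (by simp))
  have hTu : ∀ u ∈ unitary A, T u * star (T u) = T 1 :=
    fun u hu ↦ h u u (Unitary.mul_star_self_of_mem hu)
  refine ⟨AddMonoidHomClass.continuous_of_bound T _
    (CStarAlgebra.norm_apply_le_of_forall_unitary T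
      fun u hu ↦ hp.norm_le_one_of_mul_star_self_eq (hTu u hu)), fun a ↦ ?_⟩
  obtain ⟨u, c, rfl, -⟩ := CStarAlgebra.exists_sum_four_unitary a
  simp only [map_sum, map_smul, Finset.mul_sum, mul_smul_comm,
    hp.mul_of_mul_star_self_eq (hTu _ (u _).2)]

theorem stmt1 {A B : Type*}
    [NormedRing A] [StarRing A] [CStarRing A] [CompleteSpace A]
    [NormedAlgebra ℂ A] [StarModule ℂ A]
    [NonUnitalNormedRing B] [StarRing B] [CStarRing B] [CompleteSpace B]
    [NormedSpace ℂ B] [IsScalarTower ℂ B B] [SMulCommClass ℂ B B] [StarModule ℂ B]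
    (T : A →ₗ[ℂ] B)
    (h : ∀ a b : A, a * star b = 1 → T a * star (T b) = T 1) :
    Continuous T ∧ ∀ a : A, T 1 * T a = T a :=
  stmt1_general T h
end

section
/- Let A and B be C*-algebras with A unital, and let T : A → B be a linear map such that for all a, b ∈ A, a b* = 1 implies T(a) T(b)* = T(1). Then for every unitary u ∈ A (that is, u u* = u* u = 1), the element T(u) is a partial isometry in B (that is, T(u) T(u)* T(u) = T(u)), T(u) T(u)* = T(1), and T(1) T(u) = T(u). -/
theorem stmt3 {A B : Type*}
    [NormedRing A] [StarRing A] [CStarRing A] [CompleteSpace A]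
    [NormedAlgebra ℂ A] [StarModule ℂ A]
    [NonUnitalNormedRing B] [StarRing B] [CStarRing B] [CompleteSpace B]
    [NormedSpace ℂ B] [IsScalarTower ℂ B B] [SMulCommClass ℂ B B] [StarModule ℂ B]
    (T : A →ₗ[ℂ] B)
    (h : ∀ a b : A, a * star b = 1 → T a * star (T b) = T 1) :
    ∀ u : A, u * star u = 1 → star u * u = 1 →
      T u * star (T u) * T u = T u ∧
      T u * star (T u) = T 1 ∧
      T 1 * T u = T u := by
  intro u hu hu'
  have hx : T u * star (T u) = T 1 := h u u hu
  have hp : T 1 * star (T 1) = T 1 := h 1 1 (by simp)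
  have hpsa : star (T 1) = T 1 := by
    have h2 := congrArg star hp
    rw [star_mul, star_star, hp] at h2
    exact h2.symm
  have hpp : T 1 * T 1 = T 1 := by
    have := hp; rw [hpsa] at this; exact this
  set p := T 1 with hpdef
  set x := T u with hxdef
  have key : p * x = x := by
    have hy : (x - p * x) * star (x - p * x) = 0 := by
      have : star (x - p * x) = star x - star x * p := by
        rw [star_sub, star_mul, hpsa]
      rw [this, mul_sub, sub_mul, sub_mul, ← mul_assoc x (star x) p, hx,
        mul_assoc p x (star x), hx, ← mul_assoc (p*x) (star x) p,
        mul_assoc p x (star x), hx, hpp]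
      abel_nf
      rw [hpp]
      abel
    have hnorm : ‖x - p * x‖ * ‖x - p * x‖ = 0 := by
      rw [← CStarRing.norm_self_mul_star, hy, norm_zero]
    have : x - p * x = 0 := by
      have := mul_self_eq_zero.mp hnorm
      exact norm_eq_zero.mp this
    exact (sub_eq_zero.mp this).symm
  refine ⟨?_, hx, key⟩
  rw [hx, key]
end

section
/- Let A and B be C*-algebras with A unital, let p be a projection in A, and let T : A → B be a linear map which is a *-homomorphism at p and a *-homomorphism at 1 − p. Then T is a *-homomorphism at 1; that is, for all a, b ∈ A with a b* = 1 one has T(a) T(b)* = T(1), and for all c, d ∈ A with c* d = 1 one has T(c)* T(d) = T(1). -/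
theorem stmt10 {A B : Type*}
    [NormedRing A] [StarRing A] [CStarRing A] [CompleteSpace A]
    [NormedAlgebra ℂ A] [StarModule ℂ A]
    [NonUnitalNormedRing B] [StarRing B] [CStarRing B] [CompleteSpace B]
    [NormedSpace ℂ B] [IsScalarTower ℂ B B] [SMulCommClass ℂ B B] [StarModule ℂ B]
    (p : A) (hp_star : star p = p) (hp_idem : p * p = p)
    (T : A →ₗ[ℂ] B)
    (h1 : IsStarHomAt (⇑T) p) (h2 : IsStarHomAt (⇑T) (1 - p)) :
    (∀ a b : A, a * star b = 1 → T a * star (T b) = T 1) ∧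
    (∀ c d : A, star c * d = 1 → star (T c) * T d = T 1) := by
  obtain ⟨h1l, h1r⟩ := h1
  obtain ⟨h2l, h2r⟩ := h2
  constructor
  · intro a b hab
    have e1 : a * star (p * b) = p := by
      rw [star_mul, ← mul_assoc, hab, one_mul, hp_star]
    have e2 : a * star ((1 - p) * b) = 1 - p := by
      rw [star_mul, ← mul_assoc, hab, one_mul, star_sub, star_one, hp_star]
    have t1 := (h1l a (p * b) e1).2
    have t2 := (h2l a ((1 - p) * b) e2).2
    have key : T a * star (T (p * b)) + T a * star (T ((1 - p) * b))
        = T p + T (1 - p) := by rw [t1, t2]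
    rw [← mul_add, ← star_add, ← map_add, ← map_add] at key
    have hb : p * b + (1 - p) * b = b := by noncomm_ring
    have hp1 : p + (1 - p) = (1 : A) := by abel
    rw [hb, hp1] at key
    exact key
  · intro c d hcd
    have e1 : star (c * p) * d = p := by
      rw [star_mul, hp_star, mul_assoc, hcd, mul_one]
    have e2 : star (c * (1 - p)) * d = 1 - p := by
      rw [star_mul, star_sub, star_one, hp_star, mul_assoc, hcd, mul_one]
    have t1 := (h1r (c * p) d e1).2
    have t2 := (h2r (c * (1 - p)) d e2).2
    have key : star (T (c * p)) * T d + star (T (c * (1 - p))) * T d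
        = T p + T (1 - p) := by rw [t1, t2]
    rw [← add_mul, ← star_add, ← map_add, ← map_add] at key
    have hc : c * p + c * (1 - p) = c := by noncomm_ring
    have hp1 : p + (1 - p) = (1 : A) := by abel
    rw [hc, hp1] at key
    exact key
end

section
/- Let A and B be C*-algebras with A unital, and let S : A → B be a linear map satisfying: for all a, b ∈ A, if a b* = b* a = 1 then S(a) S(b)* = S(b)* S(a) = S(1). Then S is a Jordan *-homomorphism, that is, S(a*) = S(a)* and S(a²) = S(a)² for every a ∈ A. -/
/-!
Taking `a = b = 1` shows that `p = S 1` is a projection, and taking `a = b` unitary gives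
`S u * star (S u) = star (S u) * S u = p`, hence `‖S u‖ ≤ 1` and `S u * p = S u`. Since the
unitaries span `A` with coefficients bounded by the norm, `S` is bounded and `S a * p = S a` for
all `a`. Applying the hypothesis to `a = (1 + t • x)⁻¹`, `b = star (1 + t • x)` and expanding
`S a * (p + t • star (S (star x))) = p` to second order in `t` gives
`p * star (S (star x)) = S x * p` and `S (x * x) * p = S x * star (S (star x))`, from which
`star (S (star x)) = S x` and `S (x * x) = S x * S x`.
-/

open Filter Topology

theorem eq_zero_and_eq_zero_of_smul_add_sq_smul {𝕜 E : Type*} [NontriviallyNormedField 𝕜]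
    [NormedAddCommGroup E] [NormedSpace 𝕜 E] {v : E} {w : 𝕜 → E} (hw : ContinuousAt w 0)
    (h : ∀ᶠ t in 𝓝[≠] 0, t • v + t ^ 2 • w t = 0) : v = 0 ∧ w 0 = 0 := by
  have eq_zero_of_eventually {F : 𝕜 → E} (hF : ContinuousAt F 0)
      (h : ∀ᶠ t in 𝓝[≠] 0, F t = 0) : F 0 = 0 :=
    tendsto_nhds_unique (hF.tendsto.mono_left nhdsWithin_le_nhds)
      (tendsto_const_nhds.congr' (h.mono fun _ ht => ht.symm))
  have h_div : ∀ᶠ t in 𝓝[≠] 0, v + t • w t = 0 := by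
    filter_upwards [h, self_mem_nhdsWithin] with t ht ht0
    refine (smul_eq_zero.1 ?_).resolve_left ht0
    rwa [smul_add, smul_smul, ← sq]
  have hv : v = 0 := by
    simpa using eq_zero_of_eventually (continuousAt_const.add (continuousAt_id.smul hw)) h_div
  refine ⟨hv, eq_zero_of_eventually hw ?_⟩
  filter_upwards [h, self_mem_nhdsWithin] with t ht ht0
  refine (smul_eq_zero.1 ?_).resolve_left (pow_ne_zero 2 ht0)
  simpa [hv] using ht

theorem mul_eq_mul_and_mul_eq_mul_of_eventually_mul_eq_self {𝕜 B : Type*}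
    [NontriviallyNormedField 𝕜] [NonUnitalNormedRing B] [NormedSpace 𝕜 B] [IsScalarTower 𝕜 B B] [SMulCommClass 𝕜 B B]
    {p c d : B} {r : 𝕜 → B} (hp : IsIdempotentElem p) (hr : ContinuousAt r 0)
    (h : ∀ᶠ t in 𝓝[≠] 0, (p - t • c + t ^ 2 • r t) * (p + t • d) = p) :
    p * d = c * p ∧ r 0 * p = c * d := by
  have hw : ContinuousAt (fun t => r t * p - c * d + t • (r t * d)) 0 := by fun_prop
  have key := eq_zero_and_eq_zero_of_smul_add_sq_smul (v := p * d - c * p) hw <|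
    h.mono fun t ht => by
      rw [← sub_eq_zero.2 ht]
      simp only [add_mul, mul_add, sub_mul, smul_mul_assoc, mul_smul_comm, hp.eq]
      module
  simpa [sub_eq_zero] using key

def PreservesStarInversePairs {A B : Type*} [Ring A] [StarRing A] [Module ℂ A] [NonUnitalRing B]
    [StarRing B] [Module ℂ B] (S : A →ₗ[ℂ] B) : Prop :=
  ∀ a b : A, a * star b = 1 → star b * a = 1 → S a * star (S b) = S 1 ∧ star (S b) * S a = S 1

namespace PreservesStarInversePairs

variable {A B : Type*} [CStarAlgebra A] [NonUnitalCStarAlgebra B] {S : A →ₗ[ℂ] B}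

theorem isStarProjection_map_one (hS : PreservesStarInversePairs S) : IsStarProjection (S 1) := by
  obtain ⟨h₁, h₂⟩ := hS 1 1 (by simp) (by simp)
  have hsa : IsSelfAdjoint (S 1) := by
    have h := congrArg star h₂
    rwa [star_mul, star_star, h₂, eq_comm] at h
  exact ⟨by rwa [hsa.star_eq] at h₁, hsa⟩

theorem mul_star_map_of_mem_unitary (hS : PreservesStarInversePairs S) {u : A}
    (hu : u ∈ unitary A) : S u * star (S u) = S 1 ∧ star (S u) * S u = S 1 :=
  hS u u (Unitary.mul_star_self_of_mem hu) (Unitary.star_mul_self_of_mem hu)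

theorem norm_map_le_one_of_mem_unitary (hS : PreservesStarInversePairs S) {u : A}
    (hu : u ∈ unitary A) : ‖S u‖ ≤ 1 := by
  have h : ‖S u‖ * ‖S u‖ ≤ 1 := by
    rw [← CStarRing.norm_self_mul_star, (hS.mul_star_map_of_mem_unitary hu).1]
    exact hS.isStarProjection_map_one.norm_le
  nlinarith [norm_nonneg (S u)]

theorem map_mul_map_one_of_mem_unitary (hS : PreservesStarInversePairs S) {u : A}
    (hu : u ∈ unitary A) : S u * S 1 = S u := by
  have hp := hS.isStarProjection_map_one
  have h : star (S u - S u * S 1) * (S u - S u * S 1) = 0 := by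
    simp only [star_sub, star_mul, hp.isSelfAdjoint.star_eq, sub_mul, mul_sub]
    simp only [mul_assoc, ← mul_assoc (star (S u)), (hS.mul_star_map_of_mem_unitary hu).2,
      hp.isIdempotentElem.eq]
    abel
  exact (sub_eq_zero.1 (CStarRing.star_mul_self_eq_zero_iff _ |>.1 h)).symm

theorem map_mul_map_one (hS : PreservesStarInversePairs S) (a : A) : S a * S 1 = S a := by
  have h : LinearMap.mulRight ℂ (S 1) ∘ₗ S = S :=
    LinearMap.ext_on (CStarAlgebra.span_unitary A) fun _ hu => hS.map_mul_map_one_of_mem_unitary hu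
  exact LinearMap.congr_fun h a

theorem norm_map_le (hS : PreservesStarInversePairs S) (a : A) : ‖S a‖ ≤ 2 * ‖a‖ := by
  obtain ⟨u, c, rfl, hc⟩ := CStarAlgebra.exists_sum_four_unitary a
  calc ‖S (∑ i, c i • (u i : A))‖ ≤ ∑ i, ‖c i‖ * ‖S (u i)‖ := by
        rw [map_sum]
        refine (norm_sum_le _ _).trans_eq ?_
        simp only [map_smul, norm_smul]
    _ ≤ ∑ _ : Fin 4, ‖∑ i, c i • (u i : A)‖ / 2 * 1 := by
        gcongr with i
        exacts [hc i, hS.norm_map_le_one_of_mem_unitary (u i).2]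
    _ = 2 * ‖∑ i, c i • (u i : A)‖ := by simp; ring

theorem continuous (hS : PreservesStarInversePairs S) : Continuous S :=
  (S.mkContinuous 2 hS.norm_map_le).continuous

theorem map_one_mul_star_map_star_and_map_mul_self_mul_map_one (hS : PreservesStarInversePairs S)
    (x : A) : S 1 * star (S (star x)) = S x * S 1 ∧ S (x * x) * S 1 = S x * star (S (star x)) := by
  have hp := hS.isStarProjection_map_one
  set z : ℂ → A := fun t => Ring.inverse (1 + t • x)
  have hline : Continuous fun t : ℂ => (1 : A) + t • x := by fun_prop
  have hunit : ∀ᶠ t in 𝓝 (0 : ℂ), IsUnit ((1 : A) + t • x) :=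
    hline.continuousAt.eventually (Units.isOpen.mem_nhds (by simp))
  have hz : ContinuousAt z 0 :=
    (NormedRing.inverse_continuousAt (1 : Aˣ)).comp_of_eq hline.continuousAt (by simp)
  have hr : ContinuousAt (fun t => S (x * (x * z t))) 0 :=
    hS.continuous.continuousAt.comp (by fun_prop)
  suffices h : ∀ᶠ t in 𝓝[≠] 0, (S 1 - t • S x + t ^ 2 • S (x * (x * z t))) *
      (S 1 + t • star (S (star x))) = S 1 by
    simpa [z] using mul_eq_mul_and_mul_eq_mul_of_eventually_mul_eq_self hp.isIdempotentElem hr h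
  filter_upwards [nhdsWithin_le_nhds hunit] with t ht
  have hinv : (1 + t • x) * z t = 1 := Ring.mul_inverse_cancel _ ht
  have hz_expand : z t = 1 - t • x + t ^ 2 • (x * (x * z t)) :=
    calc z t = (1 - t • x) * ((1 + t • x) * z t) + t ^ 2 • (x * (x * z t)) := by
          simp only [sub_mul, add_mul, mul_add, one_mul, smul_mul_assoc, mul_smul_comm]
          module
      _ = 1 - t • x + t ^ 2 • (x * (x * z t)) := by rw [hinv, mul_one]
  have hSz : S (z t) = S 1 - t • S x + t ^ 2 • S (x * (x * z t)) := by
    conv_lhs => rw [hz_expand]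
    simp only [map_add, map_sub, map_smul]
  have hstar : star (S (star (1 + t • x))) = S 1 + t • star (S (star x)) := by
    simp [hp.isSelfAdjoint.star_eq]
  rw [← hSz, ← hstar]
  exact (hS (z t) (star (1 + t • x)) (by rw [star_star, Ring.inverse_mul_cancel _ ht])
    (by rw [star_star, hinv])).1

theorem star_map_star (hS : PreservesStarInversePairs S) (a : A) : star (S (star a)) = S a :=
  calc star (S (star a)) = star (S (star a) * S 1) := by rw [hS.map_mul_map_one]
    _ = S 1 * star (S (star a)) := by
      rw [star_mul, hS.isStarProjection_map_one.isSelfAdjoint.star_eq]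
    _ = S a * S 1 := (hS.map_one_mul_star_map_star_and_map_mul_self_mul_map_one a).1
    _ = S a := hS.map_mul_map_one a

theorem map_star (hS : PreservesStarInversePairs S) (a : A) : S (star a) = star (S a) := by
  simpa using (hS.star_map_star (star a)).symm

theorem map_mul_self (hS : PreservesStarInversePairs S) (a : A) : S (a * a) = S a * S a :=
  calc S (a * a) = S (a * a) * S 1 := (hS.map_mul_map_one _).symm
    _ = S a * star (S (star a)) := (hS.map_one_mul_star_map_star_and_map_mul_self_mul_map_one a).2
    _ = S a * S a := by rw [hS.star_map_star]

end PreservesStarInversePairs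

theorem stmt11 {A B : Type*}
    [NormedRing A] [StarRing A] [CStarRing A] [CompleteSpace A]
    [NormedAlgebra ℂ A] [StarModule ℂ A]
    [NonUnitalNormedRing B] [StarRing B] [CStarRing B] [CompleteSpace B]
    [NormedSpace ℂ B] [IsScalarTower ℂ B B] [SMulCommClass ℂ B B] [StarModule ℂ B]
    (S : A →ₗ[ℂ] B)
    (h : ∀ a b : A, a * star b = 1 → star b * a = 1 →
      S a * star (S b) = S 1 ∧ star (S b) * S a = S 1) :
    (∀ a : A, S (star a) = star (S a)) ∧ (∀ a : A, S (a * a) = S a * S a) := by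
  let _ : CStarAlgebra A := {}
  let _ : NonUnitalCStarAlgebra B := {}
  have hS : PreservesStarInversePairs S := h
  exact ⟨hS.map_star, hS.map_mul_self⟩
end

section
/- Let A and B be C*-algebras with A unital, let u be a unitary element of A, and let T : A → B be a bounded linear map which is a *-homomorphism at u. Then T(1) is a projection in B, T(1) T(a) = T(a) T(1) for every a ∈ A, and the map a ↦ T(1) T(a) is a Jordan homomorphism, i.e., T(1) T(a²) = (T(1) T(a))² for every a ∈ A. -/
open NormedSpace

section Calculus

variable {A B : Type*} [NormedRing A] [NormedAlgebra ℝ A] [CompleteSpace A]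

theorem exp_mul_exp_neg (x : A) : exp x * exp (-x) = 1 := by
  rw [← exp_add_of_commute_of_mem_ball (𝕂 := ℝ) (Commute.refl x).neg_right, add_neg_cancel,
    exp_zero] <;> simp [expSeries_radius_eq_top]

theorem HasDerivAt.eq_zero_of_forall_eq [NormedAddCommGroup B] [NormedSpace ℝ B]
    {f : ℝ → B} {f' c : B} {s : ℝ} (hf : HasDerivAt f f' s) (hc : ∀ t, f t = c) : f' = 0 :=
  hf.unique (by simpa only [funext hc] using hasDerivAt_const s c)

theorem ContinuousLinearMap.hasDerivAt_exp_smul [NormedAddCommGroup B] [NormedSpace ℝ B]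
    (L : A →L[ℝ] B) (x : A) (s : ℝ) :
    HasDerivAt (fun t : ℝ => L (exp (t • x))) (L (x * exp (s • x))) s :=
  L.hasFDerivAt.comp_hasDerivAt s (hasDerivAt_exp_smul_const' x s)

theorem HasDerivAt.mul_of_nonUnital [NonUnitalNormedRing B] [NormedSpace ℝ B]
    [IsScalarTower ℝ B B] [SMulCommClass ℝ B B] {f g : ℝ → B} {f' g' : B} {s : ℝ}
    (hf : HasDerivAt f f' s) (hg : HasDerivAt g g' s) :
    HasDerivAt (fun t => f t * g t) (f' * g s + f s * g') s := by
  simpa [add_comm] using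
    (ContinuousLinearMap.mul ℝ B).hasDerivAt_of_bilinear (fun _ => hf) (fun _ => hg)

theorem ContinuousLinearMap.hasDerivAt_exp_smul_mul_star [NonUnitalNormedRing B] [StarRing B]
    [ContinuousStar B] [NormedSpace ℝ B] [StarModule ℝ B] [IsScalarTower ℝ B B]
    [SMulCommClass ℝ B B] (L M : A →L[ℝ] B) (x y : A) (s : ℝ) :
    HasDerivAt (fun t : ℝ => L (exp (t • x)) * star (M (exp (t • y))))
      (L (x * exp (s • x)) * star (M (exp (s • y)))
        + L (exp (s • x)) * star (M (y * exp (s • y)))) s :=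
  (L.hasDerivAt_exp_smul x s).mul_of_nonUnital (M.hasDerivAt_exp_smul y s).star

end Calculus

theorem isStarProjection_of_star_mul_eq_of_mul_star_eq {B : Type*} [NonUnitalNormedRing B]
    [StarRing B] [CStarRing B] {e v : B} (hv : star e * v = v) (hp : e * star e = v * star v) :
    IsStarProjection e := by
  have hpe : e * star e * e = e * star e := by
    rw [hp, mul_assoc, ← star_star e, ← star_mul, hv]
  have hep : star e * (e * star e) = e * star e := by rw [hp, ← mul_assoc, hv]
  have hq : star e = star e * e := by
    have h0 : star (star e - star e * e) * (star e - star e * e) = 0 := by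
      have : star (star e - star e * e) * (star e - star e * e)
          = e * star e - e * star e * e - star e * (e * star e) + star e * (e * star e) * e := by
        simp only [star_sub, star_mul, star_star]; noncomm_ring
      rw [this, hep, hpe]; abel
    exact sub_eq_zero.mp ((CStarRing.star_mul_self_eq_zero_iff _).mp h0)
  have hsa : star e = e := by
    have h := congrArg star hq
    rw [star_star, star_mul, star_star, ← hq] at h
    exact h.symm
  refine ⟨?_, hsa⟩
  calc e * e = star e * e := by rw [hsa]
    _ = e := by rw [← hq, hsa]

namespace IsStarHomAt

variable {A B : Type*} [NormedRing A] [StarRing A] [ContinuousStar A] [NormedAlgebra ℝ A]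
  [StarModule ℝ A] [CompleteSpace A] [NonUnitalNormedRing B] [StarRing B] [ContinuousStar B]
  [NormedSpace ℝ B] [StarModule ℝ B] [IsScalarTower ℝ B B] [SMulCommClass ℝ B B]
  {T : A →L[ℝ] B} {u : A}

theorem star_map_mul_map (h : IsStarHomAt T u) (x : A) :
    star (T x) * T u = star (T 1) * T (star x * u) := by
  set M : A →L[ℝ] B := T.comp ((ContinuousLinearMap.mul ℝ A).flip u)
  have hconst : ∀ t : ℝ, star (T (exp (t • x))) * M (exp (t • -star x)) = T u := fun t =>
    (h.2 (exp (t • x)) (exp (t • -star x) * u) (by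
      rw [star_exp, star_smul, star_trivial, ← mul_assoc, smul_neg, exp_mul_exp_neg, one_mul])).2
  have h0 := (((T.hasDerivAt_exp_smul x 0).star).mul_of_nonUnital
    (M.hasDerivAt_exp_smul (-star x) 0)).eq_zero_of_forall_eq hconst
  simp only [zero_smul, exp_zero, mul_one, ContinuousLinearMap.comp_apply,
    ContinuousLinearMap.flip_apply, ContinuousLinearMap.mul_apply', one_mul, map_neg, mul_neg,
    M] at h0
  rwa [← sub_eq_add_neg, sub_eq_zero] at h0

theorem map_mul_exp_mul_star_map_exp (h : IsStarHomAt T u) (z : A) (s : ℝ) :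
    T (u * z * exp (s • z)) * star (T (exp (s • -star z)))
      = T (u * exp (s • z)) * star (T (star z * exp (s • -star z))) := by
  set L : A →L[ℝ] B := T.comp (ContinuousLinearMap.mul ℝ A u)
  have hconst : ∀ t : ℝ, L (exp (t • z)) * star (T (exp (t • -star z))) = T u := fun t =>
    (h.1 (u * exp (t • z)) (exp (t • -star z)) (by rw [star_exp, star_smul, star_trivial,
      star_neg, star_star, smul_neg, mul_assoc, exp_mul_exp_neg, mul_one])).2
  have h0 := (L.hasDerivAt_exp_smul_mul_star T z (-star z) s).eq_zero_of_forall_eq hconst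
  simp only [ContinuousLinearMap.comp_apply, ContinuousLinearMap.mul_apply', neg_mul, map_neg,
    star_neg, mul_neg, L] at h0
  rwa [mul_assoc, ← sub_eq_zero, sub_eq_add_neg]

theorem map_mul_mul_star_map_one (h : IsStarHomAt T u) (z : A) :
    T (u * z) * star (T 1) = T u * star (T (star z)) := by
  simpa using h.map_mul_exp_mul_star_map_exp z 0

theorem map_mul_mul_star_map_star (h : IsStarHomAt T u) (z : A) :
    T (u * z) * star (T (star z)) = T u * star (T (star z * star z)) := by
  set Lz : A →L[ℝ] B := T.comp (ContinuousLinearMap.mul ℝ A (u * z))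
  set L : A →L[ℝ] B := T.comp (ContinuousLinearMap.mul ℝ A u)
  set M : A →L[ℝ] B := T.comp (ContinuousLinearMap.mul ℝ A (star z))
  have h0 := ((Lz.hasDerivAt_exp_smul_mul_star T z (-star z) 0).sub
    (L.hasDerivAt_exp_smul_mul_star M z (-star z) 0)).eq_zero_of_forall_eq
    fun s => sub_eq_zero.mpr (h.map_mul_exp_mul_star_map_exp z s)
  simp only [zero_smul, exp_zero, mul_one, ContinuousLinearMap.comp_apply,
    ContinuousLinearMap.mul_apply', map_neg, star_neg, mul_neg, Lz, L, M] at h0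
  have h2 := h.map_mul_mul_star_map_one (z * z)
  rw [star_mul, ← mul_assoc] at h2
  rw [h2] at h0
  linear_combination (norm := module) (-(1 / 2 : ℝ)) • h0

theorem star_map_mul_star_mul_map (h : IsStarHomAt T u) (hu : star u * u = 1) (a : A) :
    star (T (u * star a)) * T u = star (T 1) * T a := by
  rw [h.star_map_mul_map, star_mul, star_star, mul_assoc, hu, mul_one]

variable [CStarRing B]

theorem isStarProjection_map_one (h : IsStarHomAt T u) (hu : u * star u = 1) :
    IsStarProjection (T 1) :=
  isStarProjection_of_star_mul_eq_of_mul_star_eq (h.2 1 u (by rw [star_one, one_mul])).2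
    (by simpa only [hu, star_star] using h.map_mul_mul_star_map_one (star u))

theorem star_map_mul_map_self (h : IsStarHomAt T u) (hu1 : u * star u = 1)
    (hu2 : star u * u = 1) : star (T u) * T u = T 1 := by
  have he := h.isStarProjection_map_one hu1
  rw [h.star_map_mul_map, hu2, he.isSelfAdjoint.star_eq, he.isIdempotentElem.eq]

theorem commute_map_one (h : IsStarHomAt T u) (hu1 : u * star u = 1) (hu2 : star u * u = 1)
    (a : A) : Commute (T 1) (T a) := by
  have he := h.isStarProjection_map_one hu1
  have hB : T a * star (T u) = T 1 * star (T (u * star a)) := by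
    simpa only [star_mul, star_star] using congrArg star (h.map_mul_mul_star_map_one (star a)).symm
  calc T 1 * T a = T 1 * (star (T 1) * T a) := by
        rw [he.isSelfAdjoint.star_eq, ← mul_assoc, he.isIdempotentElem.eq]
    _ = T a * (star (T u) * T u) := by
        rw [← h.star_map_mul_star_mul_map hu2, ← mul_assoc, ← hB, mul_assoc]
    _ = T a * T 1 := by rw [h.star_map_mul_map_self hu1 hu2]

theorem map_one_mul_map_mul_self (h : IsStarHomAt T u) (hu1 : u * star u = 1)
    (hu2 : star u * u = 1) (a : A) : T 1 * T (a * a) = T 1 * T a * (T 1 * T a) := by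
  have he := h.isStarProjection_map_one hu1
  have hS : T a * star (T (u * star a)) = T (a * a) * star (T u) := by
    simpa only [star_mul, star_star] using congrArg star (h.map_mul_mul_star_map_star (star a))
  have hsq : T a * (T 1 * T a) = T (a * a) * T 1 :=
    calc T a * (T 1 * T a) = T a * (star (T 1) * T a) := by rw [he.isSelfAdjoint.star_eq]
      _ = T (a * a) * (star (T u) * T u) := by
        rw [← h.star_map_mul_star_mul_map hu2, ← mul_assoc, hS, mul_assoc]
      _ = T (a * a) * T 1 := by rw [h.star_map_mul_map_self hu1 hu2]
  calc T 1 * T (a * a) = T 1 * (T (a * a) * T 1) := by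
        rw [← (h.commute_map_one hu1 hu2 (a * a)).eq, ← mul_assoc, he.isIdempotentElem.eq]
    _ = T 1 * T a * (T 1 * T a) := by rw [← hsq]; simp only [mul_assoc]

end IsStarHomAt

theorem stmt13_general {A B : Type*}
    [NormedRing A] [StarRing A] [CStarRing A] [CompleteSpace A]
    [NormedAlgebra ℂ A] [StarModule ℂ A]
    [NonUnitalNormedRing B] [StarRing B] [CStarRing B]
    [NormedSpace ℂ B] [IsScalarTower ℂ B B] [SMulCommClass ℂ B B] [StarModule ℂ B]
    (u : A) (hu1 : u * star u = 1) (hu2 : star u * u = 1)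
    (T : A →L[ℂ] B)
    (h : IsStarHomAt (⇑T) u) :
    (star (T 1) = T 1 ∧ T 1 * T 1 = T 1) ∧
    (∀ a : A, T 1 * T a = T a * T 1) ∧
    (∀ a : A, T 1 * T (a * a) = (T 1 * T a) * (T 1 * T a)) := by
  have hR : IsStarHomAt (T.restrictScalars ℝ) u := h
  have he := hR.isStarProjection_map_one hu1
  exact ⟨⟨he.isSelfAdjoint.star_eq, he.isIdempotentElem.eq⟩,
    fun a => (hR.commute_map_one hu1 hu2 a).eq, hR.map_one_mul_map_mul_self hu1 hu2⟩

theorem stmt13 {A B : Type*}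
    [NormedRing A] [StarRing A] [CStarRing A] [CompleteSpace A]
    [NormedAlgebra ℂ A] [StarModule ℂ A]
    [NonUnitalNormedRing B] [StarRing B] [CStarRing B] [CompleteSpace B]
    [NormedSpace ℂ B] [IsScalarTower ℂ B B] [SMulCommClass ℂ B B] [StarModule ℂ B]
    (u : A) (hu1 : u * star u = 1) (hu2 : star u * u = 1)
    (T : A →L[ℂ] B)
    (h : IsStarHomAt (⇑T) u) :
    (star (T 1) = T 1 ∧ T 1 * T 1 = T 1) ∧
    (∀ a : A, T 1 * T a = T a * T 1) ∧
    (∀ a : A, T 1 * T (a * a) = (T 1 * T a) * (T 1 * T a)) :=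
  stmt13_general u hu1 hu2 T h
end

section
/- Let A and B be C*-algebras with A unital, let u be a unitary element of A, and let T : A → B be a bounded linear map which is a *-homomorphism at u and which additionally satisfies T(1) T(x) = T(x) for every x ∈ A. Then T is a Jordan homomorphism, i.e., T(a²) = T(a)² for every a ∈ A. In particular this conclusion holds when T(u) is a unitary element of B. -/
open Filter Topology

section Helpers

variable {A : Type*} [NormedRing A] [CompleteSpace A] [NormedAlgebra ℂ A]

set_option linter.unusedSectionVars false

lemma normSmulLt (x : A) (l : ℂ) (hl : ‖l‖ < (‖x‖+1)⁻¹) : ‖l • x‖ < 1 := by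
  have hx : (0:ℝ) < ‖x‖ + 1 := by positivity
  have h1 : ‖l • x‖ = ‖l‖ * ‖x‖ := norm_smul _ _
  have h2 : ‖l‖ * ‖x‖ ≤ ‖l‖ * (‖x‖+1) :=
    mul_le_mul_of_nonneg_left (by linarith) (norm_nonneg l)
  have h3 : ‖l‖ * (‖x‖+1) < (‖x‖+1)⁻¹ * (‖x‖+1) :=
    mul_lt_mul_of_pos_right hl hx
  rw [inv_mul_cancel₀ (ne_of_gt hx)] at h3
  linarith

lemma unitFacts (x : A) (l : ℂ) (hl : ‖l‖ < (‖x‖+1)⁻¹) :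
    (1 - l • x) * Ring.inverse (1 - l • x) = 1 ∧
    Ring.inverse (1 - l • x) * (1 - l • x) = 1 ∧
    Ring.inverse (1 - l • x) = 1 + l • (x * Ring.inverse (1 - l • x)) ∧
    Ring.inverse (1 - l • x) = 1 + l • (Ring.inverse (1 - l • x) * x) := by
  have hu : IsUnit (1 - l • x) := isUnit_one_sub_of_norm_lt_one (normSmulLt x l hl)
  have hmv : (1 - l • x) * Ring.inverse (1 - l • x) = 1 := Ring.mul_inverse_cancel _ hu
  have hvm : Ring.inverse (1 - l • x) * (1 - l • x) = 1 := Ring.inverse_mul_cancel _ hu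
  refine ⟨hmv, hvm, ?_, ?_⟩
  · have h : (1 - l • x) * Ring.inverse (1 - l • x)
        = Ring.inverse (1 - l • x) - l • (x * Ring.inverse (1 - l • x)) := by
      rw [sub_mul, one_mul, smul_mul_assoc]
    rw [h] at hmv
    exact (sub_eq_iff_eq_add.mp hmv)
  · have h : Ring.inverse (1 - l • x) * (1 - l • x)
        = Ring.inverse (1 - l • x) - l • (Ring.inverse (1 - l • x) * x) := by
      rw [mul_sub, mul_one, mul_smul_comm]
    rw [h] at hvm
    exact (sub_eq_iff_eq_add.mp hvm)

lemma invContAt (x : A) : ContinuousAt (fun l : ℂ => Ring.inverse (1 - l • x)) 0 := by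
  have h1 : ContinuousAt (fun l : ℂ => 1 - l • x) 0 := by fun_prop
  have h2 : ContinuousAt (Ring.inverse : A → A) (1 : A) := by
    simpa using NormedRing.inverse_continuousAt (1 : Aˣ)
  have h3 : (fun l : ℂ => (1:A) - l • x) 0 = 1 := by simp
  exact ContinuousAt.comp (h3 ▸ h2) h1

end Helpers

lemma coeffExtract {B : Type*} [NonUnitalNormedRing B] [NormedSpace ℂ B]
    [IsScalarTower ℂ B B] [SMulCommClass ℂ B B]
    {Φ0 Φ1 Φ2 Φ3 C D : B} {Ψ Ψ' : ℂ → B}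
    (hΨ : ContinuousAt Ψ 0) (hΨ' : ContinuousAt Ψ' 0)
    {δ : ℝ} (hδ : 0 < δ)
    (h0 : Φ0 * C = Φ2 * D)
    (hfam : ∀ l : ℂ, l ≠ 0 → ‖l‖ < δ →
      (Φ0 - l • Φ1) * (C + l • Ψ l) = (Φ2 - l • Φ3) * (D + l • Ψ' l)) :
    Φ0 * Ψ 0 - Φ1 * C = Φ2 * Ψ' 0 - Φ3 * D := by
  have expand : ∀ (P Q R S : B) (l : ℂ),
      (P - l • Q) * (R + l • S) = P * R + l • (P * S - Q * R - l • (Q * S)) := by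
    intro P Q R S l
    simp only [sub_mul, mul_add, smul_mul_assoc, mul_smul_comm, smul_sub, smul_smul]
    abel
  set F : ℂ → B := fun l => Φ0 * Ψ l - Φ1 * C - l • (Φ1 * Ψ l) with hF
  set G : ℂ → B := fun l => Φ2 * Ψ' l - Φ3 * D - l • (Φ3 * Ψ' l) with hG
  have hFG : ∀ l : ℂ, l ≠ 0 → ‖l‖ < δ → F l = G l := by
    intro l hl hlδ
    have h := hfam l hl hlδ
    rw [expand, expand, h0] at h
    have h2 : l • F l = l • G l := by
      simpa [hF, hG] using add_left_cancel h
    have := congrArg (fun b => l⁻¹ • b) h2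
    simpa [smul_smul, inv_mul_cancel₀ hl] using this
  have hFc : ContinuousAt F 0 := by
    apply ContinuousAt.sub
    · exact (continuousAt_const.mul hΨ).sub continuousAt_const
    · exact continuousAt_id.smul (continuousAt_const.mul hΨ)
  have hGc : ContinuousAt G 0 := by
    apply ContinuousAt.sub
    · exact (continuousAt_const.mul hΨ').sub continuousAt_const
    · exact continuousAt_id.smul (continuousAt_const.mul hΨ')
  have hev : F =ᶠ[𝓝[≠] (0:ℂ)] G := by
    have h1 : ∀ᶠ l in 𝓝 (0:ℂ), ‖l‖ < δ := by
      filter_upwards [Metric.ball_mem_nhds (0:ℂ) hδ] with l hl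
      simpa [Metric.mem_ball] using hl
    filter_upwards [h1.filter_mono nhdsWithin_le_nhds, self_mem_nhdsWithin] with l h hne
    exact hFG l hne h
  have hFt : Tendsto F (𝓝[≠] (0:ℂ)) (𝓝 (F 0)) := hFc.tendsto.mono_left nhdsWithin_le_nhds
  have hGt : Tendsto G (𝓝[≠] (0:ℂ)) (𝓝 (G 0)) := hGc.tendsto.mono_left nhdsWithin_le_nhds
  have : F 0 = G 0 := tendsto_nhds_unique (hFt.congr' hev) hGt
  simpa [hF, hG] using this

set_option maxHeartbeats 2000000 in
theorem stmt14 {A B : Type*}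
    [NormedRing A] [StarRing A] [CStarRing A] [CompleteSpace A]
    [NormedAlgebra ℂ A] [StarModule ℂ A]
    [NonUnitalNormedRing B] [StarRing B] [CStarRing B] [CompleteSpace B]
    [NormedSpace ℂ B] [IsScalarTower ℂ B B] [SMulCommClass ℂ B B] [StarModule ℂ B]
    (u : A) (hu1 : u * star u = 1) (hu2 : star u * u = 1)
    (T : A →L[ℂ] B)
    (h : IsStarHomAt (⇑T) u)
    (hunit : ∀ x : A, T 1 * T x = T x) :
    ∀ a : A, T (a * a) = T a * T a := by
  -- basic consequences of the hypothesis
  have h1' : ∀ a q : A, a * q = u → T a * star (T (star q)) = T u := by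
    intro a q haq
    exact (h.1 a (star q) (by rwa [star_star])).2
  have h2' : ∀ p d : A, p * d = u → star (T (star p)) * T d = T u := by
    intro p d hpd
    exact (h.2 (star p) d (by rwa [star_star])).2
  -- linearity lemmas
  have hTS : ∀ (c : ℂ) (w z : A), T (w - c • z) = T w - c • T z := by
    intro c w z; rw [map_sub, map_smul]
  have hTA : ∀ (c : ℂ) (w z : A), T (w + c • z) = T w + c • T z := by
    intro c w z; rw [map_add, map_smul]
  have hT'S : ∀ (c : ℂ) (w z : A),
      star (T (star (w - c • z))) = star (T (star w)) - c • star (T (star z)) := by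
    intro c w z
    rw [star_sub, star_smul, map_sub, map_smul, star_sub, star_smul, star_star]
  have hT'A : ∀ (c : ℂ) (w z : A),
      star (T (star (w + c • z))) = star (T (star w)) + c • star (T (star z)) := by
    intro c w z
    rw [star_add, star_smul, map_add, map_smul, star_add, star_smul, star_star]
  -- direct identities
  have hd1 : T 1 * star (T (star u)) = T u := h1' 1 u (one_mul u)
  have hd2 : star (T (star u)) * T 1 = T u := h2' u 1 (mul_one u)
  have hd3 : star (T 1) * T u = T u := by
    have := h2' 1 u (one_mul u); simpa using this
  have hd4 : T u * star (T 1) = T u := by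
    have := h1' u 1 (mul_one u); simpa using this
  -- continuity helpers
  have hδpos : ∀ x : A, (0:ℝ) < (‖x‖+1)⁻¹ := fun x => by positivity
  have hTc : ∀ {f : ℂ → A}, ContinuousAt f 0 →
      ContinuousAt (fun l => T (f l)) 0 := fun hf =>
    (map_continuous T).continuousAt.comp hf
  have hT'c : ∀ {f : ℂ → A}, ContinuousAt f 0 →
      ContinuousAt (fun l => star (T (star (f l)))) 0 := fun hf =>
    continuous_star.continuousAt.comp ((map_continuous T).continuousAt.comp
      (continuous_star.continuousAt.comp hf))
  -- ### L1
  have hL1 : ∀ z : A, star (T 1) * T (z * u) = star (T (star z)) * T u := by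
    intro x
    have key := coeffExtract (B := B)
      (Φ0 := star (T 1)) (Φ1 := star (T (star x))) (Φ2 := star (T 1)) (Φ3 := 0)
      (C := T u) (D := T u)
      (Ψ := fun l : ℂ => T (x * Ring.inverse (1 - l • x) * u)) (Ψ' := fun _ => 0)
      (hTc ((continuousAt_const.mul (invContAt x)).mul continuousAt_const))
      continuousAt_const (hδpos x) rfl ?_
    · simpa [sub_eq_zero] using key
    · intro l hl hlδ
      obtain ⟨hmv, hvm, hv1, hv2⟩ := unitFacts x l hlδ
      have hinst := h2' (1 - l • x) (Ring.inverse (1 - l • x) * u)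
        (by rw [← mul_assoc, hmv, one_mul])
      have e1 : star (T (star ((1:A) - l • x)))
          = star (T 1) - l • star (T (star x)) := by
        have := hT'S l 1 x
        rwa [star_one] at this
      have e2 : T (Ring.inverse (1 - l • x) * u)
          = T u + l • T (x * Ring.inverse (1 - l • x) * u) := by
        have hvu : Ring.inverse (1 - l • x) * u
            = u + l • (x * Ring.inverse (1 - l • x) * u) := by
          conv_lhs => rw [hv1]
          rw [add_mul, one_mul, smul_mul_assoc]
        rw [hvu, map_add, map_smul]
      rw [← e1, ← e2, hinst]
      simp [hd3]
  -- ### L2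
  have hL2 : ∀ z : A, T u * star (T (star z)) = T (u * z) * star (T 1) := by
    intro x
    have key := coeffExtract (B := B)
      (Φ0 := T u) (Φ1 := T (u * x)) (Φ2 := T u) (Φ3 := 0)
      (C := star (T 1)) (D := star (T 1))
      (Ψ := fun l : ℂ => star (T (star (x * Ring.inverse (1 - l • x)))))
      (Ψ' := fun _ => 0)
      (hT'c (continuousAt_const.mul (invContAt x)))
      continuousAt_const (hδpos x) rfl ?_
    · simpa [sub_eq_zero] using key
    · intro l hl hlδ
      obtain ⟨hmv, hvm, hv1, hv2⟩ := unitFacts x l hlδ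
      have hinst := h1' (u * (1 - l • x)) (Ring.inverse (1 - l • x))
        (by rw [mul_assoc, hmv, mul_one])
      have e1 : T (u * (1 - l • x)) = T u - l • T (u * x) := by
        have : u * (1 - l • x) = u - l • (u * x) := by
          rw [mul_sub, mul_one, mul_smul_comm]
        rw [this, hTS]
      have e2 : star (T (star (Ring.inverse (1 - l • x))))
          = star (T 1) + l • star (T (star (x * Ring.inverse (1 - l • x)))) := by
        conv_lhs => rw [hv1]
        have := hT'A l 1 (x * Ring.inverse (1 - l • x))
        rwa [star_one] at this
      rw [← e1, ← e2, hinst]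
      simp [hd4]
  -- ### L3
  have hL3 : ∀ z : A, star (T (star u)) * T z = star (T (star (u * z))) * T 1 := by
    intro x
    have key := coeffExtract (B := B)
      (Φ0 := star (T (star u))) (Φ1 := star (T (star (u * x))))
      (Φ2 := star (T (star u))) (Φ3 := 0)
      (C := T 1) (D := T 1)
      (Ψ := fun l : ℂ => T (x * Ring.inverse (1 - l • x)))
      (Ψ' := fun _ => 0)
      (hTc (continuousAt_const.mul (invContAt x)))
      continuousAt_const (hδpos x) rfl ?_
    · simpa [sub_eq_zero] using key
    · intro l hl hlδ
      obtain ⟨hmv, hvm, hv1, hv2⟩ := unitFacts x l hlδ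
      have hinst := h2' (u * (1 - l • x)) (Ring.inverse (1 - l • x))
        (by rw [mul_assoc, hmv, mul_one])
      have e1 : star (T (star (u * (1 - l • x))))
          = star (T (star u)) - l • star (T (star (u * x))) := by
        have : u * (1 - l • x) = u - l • (u * x) := by
          rw [mul_sub, mul_one, mul_smul_comm]
        rw [this, hT'S]
      have e2 : T (Ring.inverse (1 - l • x))
          = T 1 + l • T (x * Ring.inverse (1 - l • x)) := by
        conv_lhs => rw [hv1]
        rw [map_add, map_smul]
      rw [← e1, ← e2, hinst]
      simp [hd2]
  -- ### L4
  have hL4 : ∀ z : A, T 1 * star (T (star (z * u))) = T z * star (T (star u)) := by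
    intro x
    have key := coeffExtract (B := B)
      (Φ0 := T 1) (Φ1 := T x) (Φ2 := T 1) (Φ3 := 0)
      (C := star (T (star u))) (D := star (T (star u)))
      (Ψ := fun l : ℂ => star (T (star (x * Ring.inverse (1 - l • x) * u))))
      (Ψ' := fun _ => 0)
      (hT'c ((continuousAt_const.mul (invContAt x)).mul continuousAt_const))
      continuousAt_const (hδpos x) rfl ?_
    · simpa [sub_eq_zero] using key
    · intro l hl hlδ
      obtain ⟨hmv, hvm, hv1, hv2⟩ := unitFacts x l hlδ
      have hinst := h1' (1 - l • x) (Ring.inverse (1 - l • x) * u)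
        (by rw [← mul_assoc, hmv, one_mul])
      have e1 : T ((1:A) - l • x) = T 1 - l • T x := by
        rw [hTS]
      have e2 : star (T (star (Ring.inverse (1 - l • x) * u)))
          = star (T (star u)) + l • star (T (star (x * Ring.inverse (1 - l • x) * u))) := by
        have hvu : Ring.inverse (1 - l • x) * u
            = u + l • (x * Ring.inverse (1 - l • x) * u) := by
          conv_lhs => rw [hv1]
          rw [add_mul, one_mul, smul_mul_assoc]
        rw [hvu, hT'A]
      rw [← e1, ← e2, hinst]
      simp [hd1]
  -- ### star-family : for each fixed small l
  have hstar : ∀ (x : A) (l : ℂ), ‖l‖ < (‖x‖+1)⁻¹ →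
      T (1 - l • x) * star (T (star (Ring.inverse (1 - l • x) * (x * u))))
        = T (x * (1 - l • x)) * star (T (star (Ring.inverse (1 - l • x) * u))) := by
    intro x l hlδ
    obtain ⟨hmv, hvm, hv1, hv2⟩ := unitFacts x l hlδ
    have key := coeffExtract (B := B)
      (Φ0 := T (1 - l • x)) (Φ1 := T (x * (1 - l • x)))
      (Φ2 := T (1 - l • x)) (Φ3 := 0)
      (C := star (T (star (Ring.inverse (1 - l • x) * u))))
      (D := star (T (star (Ring.inverse (1 - l • x) * u))))
      (Ψ := fun m : ℂ => star (T (star (Ring.inverse (1 - l • x) *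
        (x * Ring.inverse (1 - m • x) * u)))))
      (Ψ' := fun _ => 0)
      (hT'c (continuousAt_const.mul
        ((continuousAt_const.mul (invContAt x)).mul continuousAt_const)))
      continuousAt_const (hδpos x) rfl ?_
    · simpa [sub_eq_zero] using key
    · intro m hm hmδ
      obtain ⟨hmvm, hvmm, hv1m, hv2m⟩ := unitFacts x m hmδ
      have hprod : ((1 - m • x) * (1 - l • x)) *
          (Ring.inverse (1 - l • x) * (Ring.inverse (1 - m • x) * u)) = u := by
        rw [mul_assoc, ← mul_assoc (1 - l • x), hmv, one_mul, ← mul_assoc, hmvm, one_mul]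
      have hinst := h1' _ _ hprod
      have e1 : T ((1 - m • x) * (1 - l • x))
          = T (1 - l • x) - m • T (x * (1 - l • x)) := by
        have : (1 - m • x) * (1 - l • x) = (1 - l • x) - m • (x * (1 - l • x)) := by
          rw [sub_mul, one_mul, smul_mul_assoc]
        rw [this, hTS]
      have e2 : star (T (star (Ring.inverse (1 - l • x) * (Ring.inverse (1 - m • x) * u))))
          = star (T (star (Ring.inverse (1 - l • x) * u)))
            + m • star (T (star (Ring.inverse (1 - l • x) *
                (x * Ring.inverse (1 - m • x) * u)))) := by
        have hq : Ring.inverse (1 - l • x) * (Ring.inverse (1 - m • x) * u)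
            = Ring.inverse (1 - l • x) * u
              + m • (Ring.inverse (1 - l • x) * (x * Ring.inverse (1 - m • x) * u)) := by
          have hvu : Ring.inverse (1 - m • x) * u
              = u + m • (x * Ring.inverse (1 - m • x) * u) := by
            conv_lhs => rw [hv1m]
            rw [add_mul, one_mul, smul_mul_assoc]
          rw [hvu, mul_add, mul_smul_comm]
        rw [hq, hT'A]
      rw [← e1, ← e2, hinst]
      have hbase : T (1 - l • x) * star (T (star (Ring.inverse (1 - l • x) * u))) = T u :=
        h1' _ _ (by rw [← mul_assoc, hmv, one_mul])
      simp only [smul_zero, add_zero, sub_zero]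
      exact hbase.symm
  -- ### Q4 : T (x*x) * T'(u) = T x * T'(x*u)
  have hQ4 : ∀ z : A, T (z * z) * star (T (star u)) = T z * star (T (star (z * u))) := by
    intro x
    have key := coeffExtract (B := B)
      (Φ0 := T 1) (Φ1 := T x)
      (Φ2 := T x) (Φ3 := T (x * x))
      (C := star (T (star (x * u))))
      (D := star (T (star u)))
      (Ψ := fun l : ℂ => star (T (star ((x * Ring.inverse (1 - l • x)) * (x * u)))))
      (Ψ' := fun l : ℂ => star (T (star ((x * Ring.inverse (1 - l • x)) * u))))
      (hT'c ((continuousAt_const.mul (invContAt x)).mul continuousAt_const))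
      (hT'c ((continuousAt_const.mul (invContAt x)).mul continuousAt_const))
      (hδpos x) (hL4 x) ?_
    · -- key gives: T 1 * Ψ 0 - T x * C = T x * Ψ' 0 - T (x*x) * D
      have hk : T 1 * star (T (star (x * (x * u)))) - T x * star (T (star (x * u)))
          = T x * star (T (star (x * u))) - T (x * x) * star (T (star u)) := by
        simpa [mul_assoc] using key
      have hxxu : T 1 * star (T (star (x * (x * u)))) = T (x * x) * star (T (star u)) := by
        have := hL4 (x * x)
        rwa [mul_assoc] at this
      rw [hxxu] at hk
      have h2 : (2:ℂ) • (T (x * x) * star (T (star u)))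
          = (2:ℂ) • (T x * star (T (star (x * u)))) := by
        rw [two_smul, two_smul]
        exact sub_eq_sub_iff_add_eq_add.mp hk
      calc T (x * x) * star (T (star u))
          = (2:ℂ)⁻¹ • ((2:ℂ) • (T (x * x) * star (T (star u)))) := by
            rw [smul_smul, inv_mul_cancel₀ (two_ne_zero), one_smul]
        _ = (2:ℂ)⁻¹ • ((2:ℂ) • (T x * star (T (star (x * u))))) := by rw [h2]
        _ = T x * star (T (star (x * u))) := by
            rw [smul_smul, inv_mul_cancel₀ (two_ne_zero), one_smul]
    · intro l hl hlδ
      obtain ⟨hmv, hvm, hv1, hv2⟩ := unitFacts x l hlδ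
      have hst := hstar x l hlδ
      have e1 : T ((1:A) - l • x) = T 1 - l • T x := by rw [hTS]
      have e2 : star (T (star (Ring.inverse (1 - l • x) * (x * u))))
          = star (T (star (x * u)))
            + l • star (T (star ((x * Ring.inverse (1 - l • x)) * (x * u)))) := by
        have hq : Ring.inverse (1 - l • x) * (x * u)
            = x * u + l • ((x * Ring.inverse (1 - l • x)) * (x * u)) := by
          conv_lhs => rw [hv1]
          rw [add_mul, one_mul, smul_mul_assoc]
        rw [hq, hT'A]
      have e3 : T (x * (1 - l • x)) = T x - l • T (x * x) := by
        have : x * (1 - l • x) = x - l • (x * x) := by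
          rw [mul_sub, mul_one, mul_smul_comm]
        rw [this, hTS]
      have e4 : star (T (star (Ring.inverse (1 - l • x) * u)))
          = star (T (star u))
            + l • star (T (star ((x * Ring.inverse (1 - l • x)) * u))) := by
        have hq : Ring.inverse (1 - l • x) * u
            = u + l • ((x * Ring.inverse (1 - l • x)) * u) := by
          conv_lhs => rw [hv1]
          rw [add_mul, one_mul, smul_mul_assoc]
        rw [hq, hT'A]
      rw [← e1, ← e2, ← e3, ← e4]
      exact hst
  -- ### Step 1
  have hStep1 : ∀ z : A, T (z * z) * T u
      = T z * (star (T (star u)) * T (star u * z * u)) := by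
    intro z
    have huz : u * (star u * z * u) = z * u := by
      rw [← mul_assoc, ← mul_assoc, hu1, one_mul]
    have l3 := hL3 (star u * z * u)
    rw [huz] at l3
    calc T (z * z) * T u = T (z * z) * (star (T (star u)) * T 1) := by rw [hd2]
      _ = T (z * z) * star (T (star u)) * T 1 := by rw [← mul_assoc]
      _ = T z * star (T (star (z * u))) * T 1 := by rw [hQ4]
      _ = T z * (star (T (star (z * u))) * T 1) := by rw [mul_assoc]
      _ = T z * (star (T (star u)) * T (star u * z * u)) := by rw [← l3]
  -- ### starred L1
  have hL1s : ∀ w : A, star (T u) * T w = star (T (star (star u * w))) * T 1 := by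
    intro w
    have h0 := congrArg star (hL1 (star w))
    simp only [star_mul, star_star] at h0
    have e : star w * u = star (star u * w) := by rw [star_mul, star_star]
    rw [e] at h0
    exact h0.symm
  -- ### the Jordan identity pre-multiplied by star (T 1)
  have hS4 : ∀ y : A, star (T 1) * T (y * y) = star (T 1) * T y * T y := by
    intro y
    have hA : ∀ w : A, star u * (u * w) = w := fun w => by
      rw [← mul_assoc, hu2, one_mul]
    have hB : ∀ w : A, w * star u * u = w := fun w => by
      rw [mul_assoc, hu2, mul_one]
    have hσ : star u * (u * (y * star u)) * u = y := by rw [hA, hB]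
    have hσ2 : star u * ((u * (y * star u)) * (u * (y * star u))) * u = y * y := by
      rw [← mul_assoc (star u), hA]
      rw [mul_assoc y (star u), hA]
      rw [mul_assoc y (y * star u), hB]
    have way1 : star (T u) * (T ((u * (y * star u)) * (u * (y * star u))) * T u)
        = star (T 1) * T y * T y := by
      rw [hStep1 (u * (y * star u))]
      rw [hσ]
      rw [← mul_assoc]
      rw [hL1s (u * (y * star u))]
      rw [mul_assoc (star (T (star (star u * (u * (y * star u)))))) (T 1)]
      rw [← mul_assoc (T 1), hd1]
      rw [← mul_assoc]
      rw [← hL1 (star u * (u * (y * star u)))]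
      rw [hσ]
    have way2 : star (T u) * (T ((u * (y * star u)) * (u * (y * star u))) * T u)
        = star (T 1) * T (y * y) := by
      rw [← mul_assoc, hL1s ((u * (y * star u)) * (u * (y * star u)))]
      rw [mul_assoc, hunit u]
      rw [← hL1 (star u * ((u * (y * star u)) * (u * (y * star u))))]
      rw [hσ2]
    rw [← way2]
    exact way1
  -- ### partial isometry facts
  have hg1 : star (T u) * T u = star (T 1) * T 1 := by
    have h0 := hL1 (star u)
    rw [hu2, star_star] at h0
    exact h0.symm
  have hTuTu : T u * star (T u) = T 1 * star (T 1) := by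
    have h0 := hL2 (star u)
    rw [hu1, star_star] at h0
    exact h0
  -- ### star (T 1) acts as a left unit on the range of T
  have hQT : ∀ z : A, star (T 1) * T z = T z := by
    intro z
    have hb : T 1 * T z = T z := hunit z
    have hgz : (star (T u) * T u) * T z = star (T 1) * T z := by
      rw [hg1, mul_assoc, hb]
    have hgg : (star (T u) * T u) * (star (T u) * T u) = star (T u) * T u := by
      calc (star (T u) * T u) * (star (T u) * T u)
          = star (T u) * ((T u * star (T u)) * T u) := by
            rw [mul_assoc, ← mul_assoc (T u)]
        _ = star (T u) * ((T 1 * star (T 1)) * T u) := by rw [hTuTu]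
        _ = star (T u) * (T 1 * (star (T 1) * T u)) := by rw [mul_assoc]
        _ = star (T u) * (T 1 * T u) := by rw [hd3]
        _ = star (T u) * T u := by rw [hunit u]
    have hgstar : star (star (T u) * T u) = star (T u) * T u := by
      rw [star_mul, star_star]
    have h1 : star (T z) * ((star (T u) * T u) * T z) = star (T z) * T z := by
      rw [hgz, ← mul_assoc, ← star_mul, hb]
    have hcc : star (T z - (star (T u) * T u) * T z) *
        (T z - (star (T u) * T u) * T z) = 0 := by
      have h2 : star ((star (T u) * T u) * T z) = star (T z) * (star (T u) * T u) := by
        rw [star_mul, hgstar]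
      have h3 : (star (T z) * (star (T u) * T u)) * T z = star (T z) * T z := by
        rw [mul_assoc, h1]
      have h4 : (star (T z) * (star (T u) * T u)) * ((star (T u) * T u) * T z)
          = star (T z) * T z := by
        rw [mul_assoc, ← mul_assoc (star (T u) * T u) (star (T u) * T u), hgg, h1]
      rw [star_sub, sub_mul, mul_sub, mul_sub, h2, h1, h3, h4]
      simp
    have hc0 : T z - (star (T u) * T u) * T z = 0 := by
      have hn := CStarRing.norm_star_mul_self
        (x := T z - (star (T u) * T u) * T z)
      rw [hcc, norm_zero] at hn
      have hz0 : ‖T z - (star (T u) * T u) * T z‖ = 0 := by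
        nlinarith [norm_nonneg (T z - (star (T u) * T u) * T z)]
      exact norm_eq_zero.mp hz0
    have hge : (star (T u) * T u) * T z = T z := (sub_eq_zero.mp hc0).symm
    rw [← hgz]
    exact hge
  -- ### conclusion
  intro a
  calc T (a * a) = star (T 1) * T (a * a) := (hQT _).symm
    _ = star (T 1) * T a * T a := hS4 a
    _ = T a * T a := by rw [hQT a]
end

section
/- Let A and B be C*-algebras with A unital, let u be a unitary element of A, and let T : A → B be a bounded linear map which is a *-homomorphism at u. Then T(u) is a partial isometry in B (T(u) T(u)* T(u) = T(u)), and T(u)* T(u) = T(u) T(u)* = T(1). -/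
open Complex ComplexStarModule WithConv

lemma mul_add_mul_eq_zero_of_hasDerivAt_of_mul_eq_const {B : Type*} [NonUnitalNormedRing B]
    [NormedSpace ℝ B] [IsScalarTower ℝ B B] [SMulCommClass ℝ B B]
    {f g : ℝ → B} {f' g' c : B} {t : ℝ} (hf : HasDerivAt f f' t) (hg : HasDerivAt g g' t)
    (hfg : ∀ s, f s * g s = c) : f' * g t + f t * g' = 0 := by
  have hderiv := (ContinuousLinearMap.mul ℝ B).hasDerivAt_of_bilinear (fun _ ↦ hf) (fun _ ↦ hg)
  simp only [ContinuousLinearMap.mul_apply', hfg] at hderiv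
  rw [add_comm]
  exact hderiv.unique (hasDerivAt_const t c)

section UnitaryOrbit

variable {A : Type*} [NormedRing A] [NormedAlgebra ℂ A] [StarRing A] [ContinuousStar A]
  [CompleteSpace A] [StarModule ℂ A]

lemma hasDerivAt_expUnitary_smul (a : selfAdjoint A) :
    HasDerivAt (fun t : ℝ ↦ (selfAdjoint.expUnitary (t • a) : A)) (I • (a : A)) 0 := by
  have := hasDerivAt_exp_smul_const (𝕂 := ℝ) (I • (a : A)) 0
  simp only [zero_smul, NormedSpace.exp_zero, one_mul] at this
  convert this using 2 with t
  simp [smul_comm (t : ℝ) I]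

variable {B : Type*} [NonUnitalNormedRing B] [StarRing B] [ContinuousStar B]
  [NormedSpace ℂ B] [IsScalarTower ℂ B B] [SMulCommClass ℂ B B] [StarModule ℂ B]

lemma mul_star_eq_of_forall_unitary (S R : A →L[ℂ] B) {c : B}
    (h : ∀ w ∈ unitary A, S w * star (R w) = c) (x : A) :
    S x * star (R 1) = S 1 * star (R (star x)) := by
  have hsa : ∀ a : selfAdjoint A, S a * star (R 1) = S 1 * star (R a) := by
    intro a
    have hγ := hasDerivAt_expUnitary_smul a
    have hS := (S.restrictScalars ℝ).hasFDerivAt.comp_hasDerivAt (0 : ℝ) hγ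
    have hR := ((R.restrictScalars ℝ).hasFDerivAt.comp_hasDerivAt (0 : ℝ) hγ).star
    have hderiv := mul_add_mul_eq_zero_of_hasDerivAt_of_mul_eq_const hS hR
      (fun t ↦ h _ (selfAdjoint.expUnitary (t • a)).prop)
    simp only [Function.comp_def, ContinuousLinearMap.coe_restrictScalars', map_smul,
      star_smul, smul_mul_assoc, mul_smul_comm, zero_smul, selfAdjoint.expUnitary_zero,
      star_def, conj_I, neg_smul, mul_neg] at hderiv
    rw [← sub_eq_add_neg, ← smul_sub, smul_eq_zero, sub_eq_zero] at hderiv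
    exact hderiv.resolve_left I_ne_zero
  have hx := realPart_add_I_smul_imaginaryPart x
  calc S x * star (R 1) = S (ℜ x) * star (R 1) + I • (S (ℑ x) * star (R 1)) := by
        rw [← smul_mul_assoc, ← map_smul, ← add_mul, ← map_add, hx]
    _ = S 1 * star (R (ℜ x)) + I • (S 1 * star (R (ℑ x))) := by rw [hsa, hsa]
    _ = S 1 * star (R (star x)) := by
        conv_rhs => rw [← hx]
        simp [star_smul, mul_add, mul_smul_comm, (ℜ x).prop.star_eq, (ℑ x).prop.star_eq]

lemma star_mul_eq_of_forall_unitary (S R : A →L[ℂ] B) {c : B}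
    (h : ∀ w ∈ unitary A, star (R w) * S w = c) (x : A) :
    star (R 1) * S x = star (R (star x)) * S 1 := by
  -- conjugating both maps by `star` reverses the order of the products
  have := mul_star_eq_of_forall_unitary (star (toConv R)).ofConv (star (toConv S)).ofConv
    (fun w hw ↦ by simpa using h (star w) (Unitary.star_mem hw)) x
  simpa using this.symm

end UnitaryOrbit

section StarRelations

variable {R : Type*} [NonUnitalRing R] [StarRing R] {a e v : R}

lemma isIdempotentElem_mul_star_self_of_mul_star_eq (hae : a * star e = a)
    (h : star e * e = star a * a) : IsIdempotentElem (a * star a) := by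
  have hea : e * star a = star a := by simpa using congrArg star hae
  calc a * star a * (a * star a) = a * (star a * a) * star a := by simp only [mul_assoc]
    _ = a * star e * (e * star a) := by rw [← h]; simp only [mul_assoc]
    _ = a * star a := by rw [hae, hea]

lemma star_mul_self_eq_mul_star_self_of_mul_star_eq (hev : e * star v = a)
    (h₁ : e * star e = a * star a) (h₃ : v * star v = e * star e) (h₄ : star e * e = star v * v)
    (hidem : IsIdempotentElem (a * star a)) : star a * a = a * star a := by
  have hve : v * star e = star a := by simpa using congrArg star hev
  calc star a * a = v * (star e * e) * star v := by rw [← hve, ← hev]; simp only [mul_assoc]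
    _ = v * star v * (v * star v) := by rw [h₄]; simp only [mul_assoc]
    _ = a * star a := by rw [h₃, h₁, hidem.eq]

end StarRelations

section CStarRing

variable {B : Type*} [NonUnitalNormedRing B] [StarRing B] [CStarRing B]

lemma CStarRing.eq_of_mul_star_eq {e p : B} (he : e * star e = p) (hep : e * star p = p)
    (hpe : p * star e = p) (hp : p * star p = p) : e = p := by
  rw [← sub_eq_zero, ← CStarRing.mul_star_self_eq_zero_iff, star_sub, mul_sub, sub_mul, sub_mul,
    he, hep, hpe, hp, sub_self]

lemma CStarRing.mul_star_mul_self_eq_self_of_relations {a e v : B} (hae : a * star e = a)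
    (hev : e * star v = a) (h₁ : e * star e = a * star a) (h₂ : star e * e = star a * a)
    (h₃ : v * star v = e * star e) (h₄ : star e * e = star v * v) :
    a * star a * a = a ∧ star a * a = e ∧ a * star a = e := by
  have hidem := isIdempotentElem_mul_star_self_of_mul_star_eq hae h₂
  have hnormal := star_mul_self_eq_mul_star_self_of_mul_star_eq hev h₁ h₃ h₄ hidem
  have he : e = star a * a := by
    refine CStarRing.eq_of_mul_star_eq (by rw [h₁, hnormal]) ?_ ?_ ?_
    · simpa [← mul_assoc] using congrArg (· * a) (congrArg star hae)
    · simp [mul_assoc, hae]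
    · simpa [hnormal] using hidem.eq
  have he_sa : star e = e := by rw [he, star_mul, star_star]
  refine ⟨?_, he.symm, hnormal ▸ he.symm⟩
  rw [mul_assoc, ← he, ← he_sa, hae]

end CStarRing

theorem stmt15_general {A B : Type*}
    [NormedRing A] [StarRing A] [CStarRing A] [CompleteSpace A]
    [NormedAlgebra ℂ A] [StarModule ℂ A]
    [NonUnitalNormedRing B] [StarRing B] [CStarRing B]
    [NormedSpace ℂ B] [IsScalarTower ℂ B B] [SMulCommClass ℂ B B] [StarModule ℂ B]
    (u : A) (hu1 : u * star u = 1) (hu2 : star u * u = 1)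
    (T : A →L[ℂ] B)
    (h : IsStarHomAt (⇑T) u) :
    T u * star (T u) * T u = T u ∧
    star (T u) * T u = T 1 ∧
    T u * star (T u) = T 1 := by
  have hL : ∀ a b, a * star b = u → T a * star (T b) = T u := fun a b hab ↦ (h.1 a b hab).2
  have hR : ∀ c d, star c * d = u → star (T c) * T d = T u := fun c d hcd ↦ (h.2 c d hcd).2
  have hae : T u * star (T 1) = T u := by simpa using hL u 1 (by simp)
  have hev : T 1 * star (T (star u)) = T u := by simpa using hL 1 (star u) (by simp)
  have h₁ : T 1 * star (T 1) = T u * star (T u) := by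
    simpa [hu1] using mul_star_eq_of_forall_unitary (T ∘L ContinuousLinearMap.mul ℂ A u) T
      (fun w hw ↦ hL _ _ (by simp [mul_assoc, Unitary.mul_star_self_of_mem hw])) (star u)
  have h₂ : star (T 1) * T 1 = star (T u) * T u := by
    simpa [hu2] using star_mul_eq_of_forall_unitary (T ∘L (ContinuousLinearMap.mul ℂ A).flip u) T
      (fun w hw ↦ hR _ _ (by simp [← mul_assoc, Unitary.star_mul_self_of_mem hw])) (star u)
  have h₃ : T (star u) * star (T (star u)) = T 1 * star (T 1) := by
    simpa [hu2] using mul_star_eq_of_forall_unitary T (T ∘L ContinuousLinearMap.mul ℂ A (star u))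
      (fun w hw ↦ hL _ _ (by simp [← mul_assoc, Unitary.mul_star_self_of_mem hw])) (star u)
  have h₄ : star (T 1) * T 1 = star (T (star u)) * T (star u) := by
    simpa [hu1] using (star_mul_eq_of_forall_unitary T
      (T ∘L (ContinuousLinearMap.mul ℂ A).flip (star u))
      (fun w hw ↦ hR _ _ (by simp [mul_assoc, Unitary.star_mul_self_of_mem hw])) (star u)).symm
  exact CStarRing.mul_star_mul_self_eq_self_of_relations hae hev h₁ h₂ h₃ h₄

theorem stmt15 {A B : Type*}
    [NormedRing A] [StarRing A] [CStarRing A] [CompleteSpace A]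
    [NormedAlgebra ℂ A] [StarModule ℂ A]
    [NonUnitalNormedRing B] [StarRing B] [CStarRing B] [CompleteSpace B]
    [NormedSpace ℂ B] [IsScalarTower ℂ B B] [SMulCommClass ℂ B B] [StarModule ℂ B]
    (u : A) (hu1 : u * star u = 1) (hu2 : star u * u = 1)
    (T : A →L[ℂ] B)
    (h : IsStarHomAt (⇑T) u) :
    T u * star (T u) * T u = T u ∧
    star (T u) * T u = T 1 ∧
    T u * star (T u) = T 1 :=
  stmt15_general u hu1 hu2 T h
end

section
/- Let A and B be C*-algebras with A unital, let u be a unitary element of A, and let T : A → B be a bounded linear map which is a *-homomorphism at u. Then for every x ∈ A one has T(u)* T(x u) = T(u* x) T(u) and T(u x) T(u)* = T(u) T(x u*). -/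
/-- The key algebraic lemma: if `T` is a `*`-homomorphism at `u` then the
conclusion holds for every *invertible* `x` (with two-sided inverse `y`). -/
lemma isStarHomAt_key {A B : Type*} [Ring A] [StarRing A]
    [NonUnitalSemiring B] [StarRing B]
    (u : A) (T : A → B)
    (h1 : ∀ a b : A, a * star b = u →
      T (a * star b) = T a * star (T b) ∧ T a * star (T b) = T u)
    (h2 : ∀ c d : A, star c * d = u →
      T (star c * d) = star (T c) * T d ∧ star (T c) * T d = T u)
    (x y : A) (hxy : x * y = 1) (hyx : y * x = 1) :
    star (T u) * T (x * u) = T (star u * x) * T u ∧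
      T (u * x) * star (T u) = T u * T (x * star u) := by
  have A1 : star (T (star y)) * T (x * u) = T u :=
    (h2 (star y) (x * u) (by rw [star_star, ← mul_assoc, hyx, one_mul])).2
  have A2 : T (star y) * star (T (star u * x)) = T u :=
    (h1 (star y) (star u * x)
      (by rw [star_mul, star_star, ← mul_assoc, ← star_mul, hxy, star_one, one_mul])).2
  have A2s : T (star u * x) * star (T (star y)) = star (T u) := by
    simpa [star_mul, star_star] using congrArg star A2
  have A3 : T (u * x) * star (T (star y)) = T u :=
    (h1 (u * x) (star y) (by rw [star_star, mul_assoc, hxy, mul_one])).2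
  have A4 : star (T (x * star u)) * T (star y) = T u :=
    (h2 (x * star u) (star y)
      (by rw [star_mul, star_star, mul_assoc, ← star_mul, hyx, star_one, mul_one])).2
  have A4s : star (T (star y)) * T (x * star u) = star (T u) := by
    simpa [star_mul, star_star] using congrArg star A4
  constructor
  · calc star (T u) * T (x * u)
        = T (star u * x) * star (T (star y)) * T (x * u) := by rw [A2s]
      _ = T (star u * x) * (star (T (star y)) * T (x * u)) := mul_assoc _ _ _
      _ = T (star u * x) * T u := by rw [A1]
  · calc T (u * x) * star (T u)
        = T (u * x) * (star (T (star y)) * T (x * star u)) := by rw [A4s]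
      _ = T (u * x) * star (T (star y)) * T (x * star u) := (mul_assoc _ _ _).symm
      _ = T u * T (x * star u) := by rw [A3]

theorem stmt16 {A B : Type*}
    [NormedRing A] [StarRing A] [CStarRing A] [CompleteSpace A]
    [NormedAlgebra ℂ A] [StarModule ℂ A]
    [NonUnitalNormedRing B] [StarRing B] [CStarRing B] [CompleteSpace B]
    [NormedSpace ℂ B] [IsScalarTower ℂ B B] [SMulCommClass ℂ B B] [StarModule ℂ B]
    (u : A) (hu1 : u * star u = 1) (hu2 : star u * u = 1)
    (T : A →L[ℂ] B)
    (h : IsStarHomAt (⇑T) u) :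
    ∀ x : A,
      star (T u) * T (x * u) = T (star u * x) * T u ∧
      T (u * x) * star (T u) = T u * T (x * star u) := by
  intro x
  obtain ⟨h1, h2⟩ := h
  -- scale `x` so that `1 + t⁻¹ • x` is invertible
  set t : ℂ := ((‖x‖ + 1 : ℝ) : ℂ) with ht_def
  have htpos : (0 : ℝ) < ‖x‖ + 1 := by positivity
  have ht : t ≠ 0 := by
    simp only [ht_def, ne_eq, Complex.ofReal_eq_zero]
    exact ne_of_gt htpos
  have hz : ‖-(t⁻¹ • x)‖ < 1 := by
    rw [norm_neg, norm_smul, norm_inv]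
    have htnorm : ‖t‖ = ‖x‖ + 1 := by
      rw [ht_def, Complex.norm_real, Real.norm_of_nonneg htpos.le]
    rw [htnorm]
    rw [inv_mul_lt_iff₀ htpos, mul_one]
    linarith
  set u1 : Aˣ := Units.oneSub (-(t⁻¹ • x)) hz with hu1_def
  have hv : (u1 : A) = 1 + t⁻¹ • x := by
    rw [hu1_def, Units.val_oneSub, sub_neg_eq_add]
  have hx : x = t • (u1 : A) - t • (1 : A) := by
    rw [hv, smul_add, smul_smul, mul_inv_cancel₀ ht, one_smul]
    abel
  have K1 := isStarHomAt_key u (⇑T) h1 h2 (u1 : A) ((u1⁻¹ : Aˣ) : A)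
    (by exact_mod_cast u1.mul_inv) (by exact_mod_cast u1.inv_mul)
  have K2 := isStarHomAt_key u (⇑T) h1 h2 1 1 (one_mul 1) (one_mul 1)
  have K2a : star (T u) * T u = T (star u) * T u := by
    simpa using K2.1
  have K2b : T u * star (T u) = T u * T (star u) := by
    simpa using K2.2
  constructor
  · rw [hx]
    simp only [sub_mul, mul_sub, smul_mul_assoc, mul_smul_comm, map_sub, map_smul,
      one_mul, mul_one]
    rw [K1.1, K2a]
  · rw [hx]
    simp only [sub_mul, mul_sub, smul_mul_assoc, mul_smul_comm, map_sub, map_smul,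
      one_mul, mul_one]
    rw [K1.2, K2b]
end
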